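/- Let N ≥ 0 and let P be a polynomial over ℚ in the variables y₀, …, y_N, x, q. For a formal power series G in the two variables x and ε over ℚ, let Ĝⱼ denote the series obtained from G by substituting (1-ε)ʲ·x for x, and set H(G) = P(Ĝ₀, Ĝ₁, …, Ĝ_N, x, 1-ε). Suppose G and G' both satisfy H(G) = 0 and H(G') = 0, their ε⁰-coefficients coincide and equal g₀(x), and the power series (∑_{k=0}^{N} ∂_{y_k}P)(g₀(x), …, g₀(x), x, 1) is invertible in ℚ⟦x⟧. Then G = G'. -/

import Mathlib

/-!
If `G - G' ∈ (εⁿ)` with `n ≥ 1`, the first-order Taylor expansion of `P` at the arguments of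
`H(G')` has its remainder in `(ε²ⁿ) ⊆ (εⁿ⁺¹)`. Since `(1 - ε)ᵏ ≡ 1 mod ε`, the substitution
`x ↦ (1 - ε)ᵏ x` preserves `(εⁿ)` and the `εⁿ`-coefficient of its elements, so the
`εⁿ`-coefficient of `H(G) - H(G') = 0` is `(∑ₖ ∂_{y_k}P)(g₀, …, g₀, x, 1) · (gₙ - gₙ')`.
The first factor is a unit, hence `gₙ = gₙ'`, i.e. `G - G' ∈ (εⁿ⁺¹)`. The case `n = 0` is the
hypothesis on `g₀`.
-/

/-- The coefficient `gᵢ(x) ∈ ℚ⟦x⟧` of `εⁱ` in a formal power series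
`G ∈ ℚ⟦x, ε⟧`, modelled as an element of `(ℚ⟦ε⟧)⟦x⟧`. -/
noncomputable def epsCoeff (i : ℕ) (G : PowerSeries (PowerSeries ℚ)) : PowerSeries ℚ :=
  PowerSeries.mk fun m =>
    PowerSeries.coeff i (PowerSeries.coeff m G)

/-- `H(G) = P(Ĝ₀, Ĝ₁, …, Ĝ_N, x, 1-ε)`, where `Ĝⱼ` is obtained from `G` by
substituting `(1-ε)ʲ·x` for `x`.  Variables: `Sum.inl k` is `y_k`, `Sum.inr 0`
is `x` and `Sum.inr 1` is `q`. -/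
noncomputable def qSubst (N : ℕ) (P : MvPolynomial (Fin (N + 1) ⊕ Fin 2) ℚ)
    (G : PowerSeries (PowerSeries ℚ)) : PowerSeries (PowerSeries ℚ) :=
  MvPolynomial.aeval
    (Sum.elim
      (fun k : Fin (N + 1) =>
        PowerSeries.rescale ((1 - PowerSeries.X : PowerSeries ℚ) ^ (k : ℕ)) G)
      (fun j : Fin 2 =>
        if j = 0 then PowerSeries.X
        else PowerSeries.C (R := PowerSeries ℚ) (1 - PowerSeries.X))) P

/-- Evaluation of a polynomial in the variables `y₀, …, y_N, x, q` at
`(g₀(x), …, g₀(x), x, 1)`, as an element of `ℚ⟦x⟧`. -/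
noncomputable def diagEval (N : ℕ) (g0 : PowerSeries ℚ)
    (Q : MvPolynomial (Fin (N + 1) ⊕ Fin 2) ℚ) : PowerSeries ℚ :=
  MvPolynomial.aeval
    (Sum.elim (fun _ : Fin (N + 1) => g0)
      (fun j : Fin 2 => if j = 0 then PowerSeries.X else 1)) Q

open PowerSeries

namespace MvPolynomial

variable {R A σ : Type*} [CommRing R] [CommRing A] [Algebra R A]

theorem aeval_sub_aeval_mem {J : Ideal A} {a b : σ → A} (hab : ∀ k, a k - b k ∈ J)
    (p : MvPolynomial σ R) : aeval a p - aeval b p ∈ J := by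
  rw [← Ideal.Quotient.eq, ← Ideal.Quotient.mkₐ_eq_mk R, comp_aeval_apply, comp_aeval_apply]
  congr 2 with k
  exact Ideal.Quotient.eq.2 (hab k)

theorem aeval_sub_aeval_sub_sum_pderiv_mem_sq [Fintype σ] {J : Ideal A} {a b : σ → A}
    (hab : ∀ k, a k - b k ∈ J) (p : MvPolynomial σ R) :
    aeval a p - aeval b p - ∑ k, aeval b (pderiv k p) * (a k - b k) ∈ J ^ 2 := by
  rw [sq]
  induction p using MvPolynomial.induction_on with
  | C r => simp
  | add p q hp hq =>
    convert add_mem hp hq using 1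
    simp only [map_add, add_mul, Finset.sum_add_distrib]
    ring
  | mul_X p i hp =>
    classical
    -- The remainder of `p * X i` is `(p(a) - p(b)) (a i - b i) + b i * (remainder of p)`.
    have hleibniz : ∑ k, aeval b (pderiv k (p * X i)) * (a k - b k)
        = aeval b p * (a i - b i) + b i * ∑ k, aeval b (pderiv k p) * (a k - b k) := by
      simp only [Derivation.leibniz, pderiv_X, smul_eq_mul, map_add, map_mul, aeval_X, add_mul,
        Finset.sum_add_distrib, Finset.mul_sum, mul_assoc]
      congr 1
      simp [Pi.single_apply]
    convert add_mem (Ideal.mul_mem_mul (aeval_sub_aeval_mem hab p) (hab i))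
      (Ideal.mul_mem_left _ (b i) hp) using 1
    rw [hleibniz, map_mul, map_mul, aeval_X, aeval_X]
    ring

end MvPolynomial

namespace PowerSeries

theorem coeff_mul_of_X_pow_dvd {R : Type*} [CommSemiring R] {n : ℕ} (v : R⟦X⟧) {w : R⟦X⟧}
    (hw : X ^ n ∣ w) : coeff n (v * w) = constantCoeff v * coeff n w := by
  obtain ⟨u, rfl⟩ := hw
  rw [mul_left_comm, coeff_X_pow_mul', coeff_X_pow_mul']
  simp [coeff_zero_eq_constantCoeff]

end PowerSeries

theorem epsCoeff_zero (i : ℕ) : epsCoeff i 0 = 0 := by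
  ext m
  simp [epsCoeff]

theorem epsCoeff_sub (i : ℕ) (f g : PowerSeries (PowerSeries ℚ)) :
    epsCoeff i (f - g) = epsCoeff i f - epsCoeff i g := by
  ext m
  simp [epsCoeff]

theorem epsCoeff_sum {ι : Type*} (s : Finset ι) (i : ℕ) (f : ι → PowerSeries (PowerSeries ℚ)) :
    epsCoeff i (∑ v ∈ s, f v) = ∑ v ∈ s, epsCoeff i (f v) := by
  ext m
  simp [epsCoeff]

theorem epsCoeff_zero_eq_map (f : PowerSeries (PowerSeries ℚ)) :
    epsCoeff 0 f = map constantCoeff f := by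
  ext m
  simp [epsCoeff, coeff_zero_eq_constantCoeff]

theorem epsCoeff_zero_aeval {σ : Type*} (b : σ → PowerSeries (PowerSeries ℚ))
    (Q : MvPolynomial σ ℚ) :
    epsCoeff 0 (MvPolynomial.aeval b Q) = MvPolynomial.aeval (fun v => epsCoeff 0 (b v)) Q := by
  simp only [epsCoeff_zero_eq_map]
  exact MvPolynomial.comp_aeval_apply (f := b)
    (map (constantCoeff (R := ℚ)) : PowerSeries (PowerSeries ℚ) →+* PowerSeries ℚ).toRatAlgHom Q

/-- The ideal `(εⁿ)` of `ℚ⟦x, ε⟧`. -/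
def epsPowIdeal (n : ℕ) : Ideal (PowerSeries (PowerSeries ℚ)) where
  carrier := {f | ∀ m, X ^ n ∣ coeff m f}
  add_mem' hf hg m := by
    rw [map_add]
    exact dvd_add (hf m) (hg m)
  zero_mem' m := by simp
  smul_mem' c f hf m := by
    rw [smul_eq_mul, coeff_mul]
    exact Finset.dvd_sum fun p _ => (hf p.2).mul_left _

theorem mem_epsPowIdeal_iff {n : ℕ} {f : PowerSeries (PowerSeries ℚ)} :
    f ∈ epsPowIdeal n ↔ ∀ i < n, epsCoeff i f = 0 := by
  simp only [epsPowIdeal, Submodule.mem_mk, AddSubmonoid.mem_mk, AddSubsemigroup.mem_mk,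
    Set.mem_ofPred_eq, X_pow_dvd_iff, PowerSeries.ext_iff, epsCoeff, coeff_mk, map_zero]
  exact forall_comm.trans (forall_congr' fun _ => forall_comm)

theorem mem_epsPowIdeal_succ {n : ℕ} {f : PowerSeries (PowerSeries ℚ)} :
    f ∈ epsPowIdeal (n + 1) ↔ f ∈ epsPowIdeal n ∧ epsCoeff n f = 0 := by
  simp only [mem_epsPowIdeal_iff, Nat.forall_lt_succ_right]

theorem eq_zero_of_forall_mem_epsPowIdeal {f : PowerSeries (PowerSeries ℚ)}
    (hf : ∀ n, f ∈ epsPowIdeal n) : f = 0 := by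
  ext m i
  have hi := congrArg (coeff m) (mem_epsPowIdeal_iff.1 (hf (i + 1)) i i.lt_succ_self)
  simpa [epsCoeff] using hi

theorem epsPowIdeal_antitone : Antitone epsPowIdeal :=
  fun _ _ hmn _ hf m => (pow_dvd_pow X hmn).trans (hf m)

theorem epsPowIdeal_mul_le (n₁ n₂ : ℕ) :
    epsPowIdeal n₁ * epsPowIdeal n₂ ≤ epsPowIdeal (n₁ + n₂) := by
  refine Ideal.mul_le.2 fun f hf g hg m => ?_
  rw [coeff_mul, pow_add]
  exact Finset.dvd_sum fun p _ => mul_dvd_mul (hf p.1) (hg p.2)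

theorem epsCoeff_mul_of_mem {n : ℕ} (c : PowerSeries (PowerSeries ℚ))
    {d : PowerSeries (PowerSeries ℚ)} (hd : d ∈ epsPowIdeal n) :
    epsCoeff n (c * d) = epsCoeff 0 c * epsCoeff n d := by
  ext m
  simp only [epsCoeff, coeff_mk]
  rw [coeff_mul, map_sum, coeff_mul]
  refine Finset.sum_congr rfl fun p _ => ?_
  rw [coeff_mul_of_X_pow_dvd _ (hd p.2), coeff_mk, coeff_mk, coeff_zero_eq_constantCoeff_apply]

theorem rescale_mem_epsPowIdeal {n : ℕ} (a : PowerSeries ℚ) {f : PowerSeries (PowerSeries ℚ)}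
    (hf : f ∈ epsPowIdeal n) : rescale a f ∈ epsPowIdeal n := fun m => by
  rw [coeff_rescale]
  exact (hf m).mul_left _

theorem epsCoeff_rescale_of_mem {n : ℕ} {a : PowerSeries ℚ} (ha : constantCoeff a = 1)
    {f : PowerSeries (PowerSeries ℚ)} (hf : f ∈ epsPowIdeal n) :
    epsCoeff n (rescale a f) = epsCoeff n f := by
  ext m
  simp only [epsCoeff, coeff_mk, coeff_rescale]
  rw [coeff_mul_of_X_pow_dvd _ (hf m), map_pow, ha, one_pow, one_mul]

theorem epsCoeff_aeval_sub_aeval {σ : Type*} [Fintype σ] {n : ℕ} (hn : 0 < n)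
    {a b : σ → PowerSeries (PowerSeries ℚ)} (hab : ∀ v, a v - b v ∈ epsPowIdeal n)
    (P : MvPolynomial σ ℚ) :
    epsCoeff n (MvPolynomial.aeval a P - MvPolynomial.aeval b P) =
      ∑ v, MvPolynomial.aeval (fun w => epsCoeff 0 (b w)) (MvPolynomial.pderiv v P) *
        epsCoeff n (a v - b v) := by
  have hsq : epsPowIdeal n ^ 2 ≤ epsPowIdeal (n + 1) :=
    (sq (epsPowIdeal n)).trans_le
      ((epsPowIdeal_mul_le n n).trans (epsPowIdeal_antitone (by omega)))
  have hrem := (mem_epsPowIdeal_succ.1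
    (hsq (MvPolynomial.aeval_sub_aeval_sub_sum_pderiv_mem_sq hab P))).2
  rw [epsCoeff_sub, sub_eq_zero, epsCoeff_sum] at hrem
  rw [hrem]
  refine Finset.sum_congr rfl fun v _ => ?_
  rw [epsCoeff_mul_of_mem _ (hab v), epsCoeff_zero_aeval]

/-- The point `(Ĝ₀, …, Ĝ_N, x, 1 - ε)` at which `qSubst` evaluates `P`. -/
noncomputable def qSubstArgs (N : ℕ) (G : PowerSeries (PowerSeries ℚ)) :
    Fin (N + 1) ⊕ Fin 2 → PowerSeries (PowerSeries ℚ) :=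
  Sum.elim (fun k => rescale ((1 - X : PowerSeries ℚ) ^ (k : ℕ)) G)
    (fun j => if j = 0 then X else C (1 - X))

theorem qSubst_eq_aeval (N : ℕ) (P : MvPolynomial (Fin (N + 1) ⊕ Fin 2) ℚ)
    (G : PowerSeries (PowerSeries ℚ)) : qSubst N P G = MvPolynomial.aeval (qSubstArgs N G) P :=
  rfl

theorem constantCoeff_one_sub_X_pow {R : Type*} [CommRing R] (k : ℕ) :
    constantCoeff ((1 - X : R⟦X⟧) ^ k) = 1 := by
  simp

theorem epsCoeff_zero_qSubstArgs (N : ℕ) (G : PowerSeries (PowerSeries ℚ)) :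
    (fun v => epsCoeff 0 (qSubstArgs N G v)) =
      Sum.elim (fun _ : Fin (N + 1) => epsCoeff 0 G) (fun j => if j = 0 then X else 1) := by
  funext v
  rcases v with k | j
  · exact epsCoeff_rescale_of_mem (constantCoeff_one_sub_X_pow k) (by simp [mem_epsPowIdeal_iff])
  · fin_cases j <;> simp [qSubstArgs, epsCoeff_zero_eq_map]

theorem epsCoeff_qSubst_sub (N : ℕ) (P : MvPolynomial (Fin (N + 1) ⊕ Fin 2) ℚ)
    {G G' : PowerSeries (PowerSeries ℚ)} {n : ℕ} (hn : 0 < n) (hGG' : G - G' ∈ epsPowIdeal n) :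
    epsCoeff n (qSubst N P G - qSubst N P G') =
      diagEval N (epsCoeff 0 G') (∑ k : Fin (N + 1), MvPolynomial.pderiv (Sum.inl k) P) *
        epsCoeff n (G - G') := by
  have hargs : ∀ v, qSubstArgs N G v - qSubstArgs N G' v ∈ epsPowIdeal n := by
    rintro (k | j)
    · simpa [qSubstArgs, ← map_sub] using rescale_mem_epsPowIdeal _ hGG'
    · simp [qSubstArgs]
  rw [qSubst_eq_aeval, qSubst_eq_aeval, epsCoeff_aeval_sub_aeval hn hargs,
    epsCoeff_zero_qSubstArgs, Fintype.sum_sum_type, diagEval, map_sum, Finset.sum_mul]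
  simp only [qSubstArgs, Sum.elim_inl, Sum.elim_inr, sub_self, ← map_sub,
    epsCoeff_rescale_of_mem (constantCoeff_one_sub_X_pow _) hGG', epsCoeff_zero, mul_zero,
    Finset.sum_const_zero, add_zero]

/-- If `G` and `G'` both satisfy the `q`-algebraic functional
equation `H(G) = 0`, their `ε⁰`-coefficients coincide (equal to `g₀(x)`), and
`(∑_k ∂_{y_k}P)(g₀, …, g₀, x, 1)` is invertible in `ℚ⟦x⟧`, then `G = G'`. -/
theorem stmt_3 (N : ℕ)
    (P : MvPolynomial (Fin (N + 1) ⊕ Fin 2) ℚ)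
    (G G' : PowerSeries (PowerSeries ℚ))
    (hG : qSubst N P G = 0) (hG' : qSubst N P G' = 0)
    (g0 : PowerSeries ℚ) (h0 : epsCoeff 0 G = g0) (h0' : epsCoeff 0 G' = g0)
    (hunit : IsUnit (diagEval N g0
      (∑ k : Fin (N + 1), MvPolynomial.pderiv (Sum.inl k) P))) :
    G = G' := by
  have hmem : ∀ n, G - G' ∈ epsPowIdeal n := by
    intro n
    induction n with
    | zero => simp [mem_epsPowIdeal_iff]
    | succ n ih =>
      refine mem_epsPowIdeal_succ.2 ⟨ih, ?_⟩
      rcases Nat.eq_zero_or_pos n with rfl | hn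
      · rw [epsCoeff_sub, h0, h0', sub_self]
      · have hlin := epsCoeff_qSubst_sub N P hn ih
        rw [hG, hG', sub_self, epsCoeff_zero, h0'] at hlin
        exact hunit.mul_right_eq_zero.1 hlin.symm
  exact sub_eq_zero.1 (eq_zero_of_forall_mem_epsPowIdeal hmem)
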